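/- arXiv:2206.12936 — 2 statements merged into one kernel-verified Lean document; each statement's English description precedes it below -/
import Mathlib

section
/- Let X be a complete Hausdorff locally convex topological vector space. If a function f : Ω → X is p-Bochner integrable for every continuous seminorm p on X, then f is integrable by seminorm; that is, there exist, for each continuous seminorm p, an approximating sequence (f_n^p) of measurable simple functions witnessing p-Bochner integrability such that for each E ∈ Σ there is a single vector x_E ∈ X (independent of p) with p(x_E − ∫_E f_n^p dμ) → 0 for every continuous seminorm p. -/
open MeasureTheory Filter Topology

variable {Ω : Type*} [MeasurableSpace Ω]

/-- A measurable simple function: finitely many values and measurable fibers. -/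
def IsMeasSimple {X : Type*} (s : Ω → X) : Prop :=
  (Set.range s).Finite ∧ ∀ x : X, MeasurableSet (s ⁻¹' {x})

/-- Integral of a (measurable simple) function `s` over `E`:
`∑_{x ∈ range s} μ(E ∩ s⁻¹{x}) • x`. -/
noncomputable def simpleIntegral {X : Type*} [AddCommGroup X] [Module ℝ X]
    (μ : Measure Ω) (s : Ω → X) (E : Set Ω) : X :=
  ∑ᶠ x : X, (μ (E ∩ s ⁻¹' {x})).toReal • x

/-- `f` is `p`-strongly measurable. -/
def IsPStronglyMeasurable {X : Type*} [AddCommGroup X] [Module ℝ X]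
    (μ : Measure Ω) (p : Seminorm ℝ X) (f : Ω → X) : Prop :=
  ∃ (fn : ℕ → Ω → X) (Z : Set Ω), (∀ n, IsMeasSimple (fn n)) ∧
    MeasurableSet Z ∧ μ Z = 0 ∧
    ∀ t ∉ Z, Tendsto (fun n => p (fn n t - f t)) atTop (𝓝 0)

/-- `(fn, Z)` witnesses that `f` is `p`-Bochner integrable: conditions (i), (ii)
and (iii) of the definition of `p`-Bochner integrability. -/
def IsPBochnerWitness {X : Type*} [AddCommGroup X] [Module ℝ X]
    (μ : Measure Ω) (p : Seminorm ℝ X) (f : Ω → X) (fn : ℕ → Ω → X) (Z : Set Ω) : Prop :=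
  (∀ n, IsMeasSimple (fn n)) ∧ MeasurableSet Z ∧ μ Z = 0 ∧
  (∀ t ∉ Z, Tendsto (fun n => p (fn n t - f t)) atTop (𝓝 0)) ∧
  (∀ n, Integrable (fun t => p (fn n t - f t)) μ) ∧
  Tendsto (fun n => ∫ t, p (fn n t - f t) ∂μ) atTop (𝓝 0) ∧
  ∀ E : Set Ω, MeasurableSet E → ∃ x : X,
    Tendsto (fun n => p (x - simpleIntegral μ (fn n) E)) atTop (𝓝 0)

/-- `f` is `p`-Bochner integrable. -/
def IsPBochner {X : Type*} [AddCommGroup X] [Module ℝ X]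
    (μ : Measure Ω) (p : Seminorm ℝ X) (f : Ω → X) : Prop :=
  ∃ (fn : ℕ → Ω → X) (Z : Set Ω), IsPBochnerWitness μ p f fn Z

/-- `x` is a `p`-integral of `f` over `E`. -/
def IsPIntegral {X : Type*} [AddCommGroup X] [Module ℝ X]
    (μ : Measure Ω) (p : Seminorm ℝ X) (f : Ω → X) (E : Set Ω) (x : X) : Prop :=
  ∃ (fn : ℕ → Ω → X) (Z : Set Ω), IsPBochnerWitness μ p f fn Z ∧
    Tendsto (fun n => p (x - simpleIntegral μ (fn n) E)) atTop (𝓝 0)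

/-- `f` is integrable by seminorm, with `I E` as its integral over each measurable `E`
(the vector `I E` is independent of the seminorm). -/
def IntegrableBySeminormWith {X : Type*} [AddCommGroup X] [Module ℝ X] [TopologicalSpace X]
    (μ : Measure Ω) (f : Ω → X) (I : Set Ω → X) : Prop :=
  ∃ F : Seminorm ℝ X → ℕ → Ω → X,
    (∀ p : Seminorm ℝ X, Continuous ⇑p → ∃ Z : Set Ω,
      (∀ n, IsMeasSimple (F p n)) ∧ MeasurableSet Z ∧ μ Z = 0 ∧
      (∀ t ∉ Z, Tendsto (fun n => p (F p n t - f t)) atTop (𝓝 0)) ∧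
      (∀ n, Integrable (fun t => p (F p n t - f t)) μ) ∧
      Tendsto (fun n => ∫ t, p (F p n t - f t) ∂μ) atTop (𝓝 0)) ∧
    ∀ E : Set Ω, MeasurableSet E → ∀ p : Seminorm ℝ X, Continuous ⇑p →
      Tendsto (fun n => p (I E - simpleIntegral μ (F p n) E)) atTop (𝓝 0)

/-- `f` is integrable by seminorm. -/
def IntegrableBySeminorm {X : Type*} [AddCommGroup X] [Module ℝ X] [TopologicalSpace X]
    (μ : Measure Ω) (f : Ω → X) : Prop :=
  ∃ I : Set Ω → X, IntegrableBySeminormWith μ f I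

/-- A countably additive vector measure on the measurable sets of `Ω`. -/
def IsVectorMeasureOn {X : Type*} [AddCommMonoid X] [TopologicalSpace X]
    (m : Set Ω → X) : Prop :=
  ∀ E : ℕ → Set Ω, (∀ n, MeasurableSet (E n)) → Pairwise (Function.onFun Disjoint E) →
    Tendsto (fun N => ∑ n ∈ Finset.range N, m (E n)) atTop (𝓝 (m (⋃ n, E n)))

/-- `m` is of bounded variation: for every continuous seminorm `p`, the sums
`∑_{A ∈ π} p (m A)` over finite measurable partitions `π` of `Ω` are bounded. -/
def HasBoundedVariation {X : Type*} [AddCommGroup X] [Module ℝ X] [TopologicalSpace X]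
    (m : Set Ω → X) : Prop :=
  ∀ p : Seminorm ℝ X, Continuous ⇑p → ∃ C : ℝ,
    ∀ π : Finset (Set Ω), (∀ A ∈ π, MeasurableSet A) →
      ((π : Set (Set Ω)).PairwiseDisjoint id) → ⋃₀ (π : Set (Set Ω)) = Set.univ →
      ∑ A ∈ π, p (m A) ≤ C

/-- `m` has locally relatively compact average range: for every measurable `E` of
positive measure, the set `{ m(A)/μ(A) : A ⊆ E measurable, μ A > 0 }` is relatively
compact in `X`. -/
def HasLocRelCompactAvgRange {X : Type*} [AddCommGroup X] [Module ℝ X] [TopologicalSpace X]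
    (μ : Measure Ω) (m : Set Ω → X) : Prop :=
  ∀ E : Set Ω, MeasurableSet E → 0 < μ E →
    IsCompact (closure {x : X | ∃ A : Set Ω, MeasurableSet A ∧ A ⊆ E ∧ 0 < μ A ∧
      x = (μ A).toReal⁻¹ • m A})

/-- `X` is a `B`-locally convex space with respect to `(Ω, Σ, μ)`: every family
`(f_p)`, indexed by the continuous seminorms on `X`, of pairwise almost the same
Bochner integrable functions admits a function `f : Ω → X` with
`∫ p (f - f_p) dμ = 0` for every continuous seminorm `p`. -/
def IsBLocallyConvex (X : Type*) [AddCommGroup X] [Module ℝ X] [TopologicalSpace X]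
    {Ω : Type*} [MeasurableSpace Ω] (μ : Measure Ω) : Prop :=
  ∀ F : Seminorm ℝ X → Ω → X,
    (∀ p : Seminorm ℝ X, Continuous ⇑p → IsPBochner μ p (F p)) →
    (∀ p q : Seminorm ℝ X, Continuous ⇑p → Continuous ⇑q → (∀ x, p x ≤ q x) →
      ∃ Z : Set Ω, MeasurableSet Z ∧ μ Z = 0 ∧ ∀ t ∉ Z, p (F p t - F q t) = 0) →
    ∃ f : Ω → X, ∀ p : Seminorm ℝ X, Continuous ⇑p →
      Integrable (fun t => p (f t - F p t)) μ ∧ (∫ t, p (f t - F p t) ∂μ) = 0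

/-! For continuous seminorms `q ≤ p₁, p₂` the `p₁`- and `p₂`-limits of the simple integrals over
`E` are at `q`-distance zero, since `q (∫_E s₁ - ∫_E s₂) ≤ ∫ p₁ (s₁ - f) + ∫ p₂ (s₂ - f)`.
Indexed by the directed set of continuous seminorms, these limits therefore form a Cauchy net;
by completeness it converges, and its limit is at `p`-distance zero from the `p`-limit for
every `p`, so it is a common integral for all seminorms. -/

def IsMeasSimple.toSimpleFunc {X : Type*} {s : Ω → X} (h : IsMeasSimple s) : SimpleFunc Ω X :=
  ⟨s, h.2, h.1⟩

section SimpleIntegral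

variable {X Y : Type*} [AddCommGroup X] [Module ℝ X] {μ : Measure Ω} [IsFiniteMeasure μ]
  {E : Set Ω}

lemma simpleIntegral_comp (φ : SimpleFunc Ω Y) (g : Y → X) (hE : MeasurableSet E) :
    simpleIntegral μ (g ∘ φ) E = ∑ y ∈ φ.range, μ.real (E ∩ φ ⁻¹' {y}) • g y := by
  classical
  have hsupp : Function.support (fun x => (μ (E ∩ (g ∘ φ) ⁻¹' {x})).toReal • x)
      ⊆ ↑(φ.range.image g) := Function.support_subset_iff'.2 fun x hx => by
    rw [Set.preimage_singleton_eq_empty.2 (by simpa [Set.range_comp] using hx), Set.inter_empty,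
      measure_empty, ENNReal.toReal_zero, zero_smul]
  rw [simpleIntegral, finsum_eq_sum_of_support_subset _ hsupp,
    ← Finset.sum_fiberwise_of_maps_to (fun y hy => Finset.mem_image_of_mem g hy)]
  refine Finset.sum_congr rfl fun x _ => ?_
  have hfiber : E ∩ (g ∘ φ) ⁻¹' {x} = ⋃ y ∈ φ.range.filter (g · = x), E ∩ φ ⁻¹' {y} := by
    ext ω
    simp only [Set.mem_inter_iff, Set.mem_preimage, Function.comp_apply, Set.mem_singleton_iff,
      Set.mem_iUnion, Finset.mem_filter, SimpleFunc.mem_range, Set.mem_range, exists_prop]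
    grind
  rw [← measureReal_def, hfiber, measureReal_biUnion_finset _
    (fun y _ => hE.inter (φ.measurableSet_fiber y)), Finset.sum_smul]
  · exact Finset.sum_congr rfl fun y hy => by rw [(Finset.mem_filter.mp hy).2]
  · intro y _ z _ hyz
    exact (Set.disjoint_singleton.mpr hyz |>.preimage φ).inter_right' E |>.inter_left' E

lemma setIntegral_eq_simpleIntegral (φ : SimpleFunc Ω ℝ) (hE : MeasurableSet E) :
    ∫ ω in E, φ ω ∂μ = simpleIntegral μ φ E := by
  change _ = simpleIntegral μ (id ∘ φ) E
  rw [← φ.integral_eq_integral (μ := μ.restrict E) φ.integrable_of_isFiniteMeasure,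
    SimpleFunc.integral_eq, simpleIntegral_comp φ id hE]
  refine Finset.sum_congr rfl fun y _ => ?_
  rw [measureReal_restrict_apply (φ.measurableSet_fiber y), Set.inter_comm, id]

lemma seminorm_simpleIntegral_sub_le (q : Seminorm ℝ X) {s₁ s₂ : Ω → X}
    (h₁ : IsMeasSimple s₁) (h₂ : IsMeasSimple s₂) (hE : MeasurableSet E) :
    q (simpleIntegral μ s₁ E - simpleIntegral μ s₂ E) ≤ ∫ ω in E, q (s₁ ω - s₂ ω) ∂μ := by
  set φ := h₁.toSimpleFunc.pair h₂.toSimpleFunc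
  have hs₁ : s₁ = Prod.fst ∘ φ := rfl
  have hs₂ : s₂ = Prod.snd ∘ φ := rfl
  have hq : (fun ω => q (s₁ ω - s₂ ω)) = ⇑(φ.map fun y => q (y.1 - y.2)) := rfl
  rw [hq, setIntegral_eq_simpleIntegral _ hE, SimpleFunc.coe_map, hs₁, hs₂,
    simpleIntegral_comp φ _ hE, simpleIntegral_comp φ _ hE, simpleIntegral_comp φ _ hE,
    ← Finset.sum_sub_distrib]
  refine (Finset.le_sum_of_subadditive q (map_zero q).le (map_add_le_add q) _ _).trans_eq ?_
  refine Finset.sum_congr rfl fun y _ => ?_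
  rw [← smul_sub, map_smul_eq_mul, Real.norm_of_nonneg measureReal_nonneg, smul_eq_mul]

lemma IsMeasSimple.integrable_seminorm_sub {s₁ s₂ : Ω → X} (h₁ : IsMeasSimple s₁)
    (h₂ : IsMeasSimple s₂) (q : Seminorm ℝ X) : Integrable (fun ω => q (s₁ ω - s₂ ω)) μ :=
  ((h₁.toSimpleFunc.pair h₂.toSimpleFunc).map fun y : X × X => q (y.1 - y.2))
    |>.integrable_of_isFiniteMeasure

lemma seminorm_simpleIntegral_sub_le_integral {q p₁ p₂ : Seminorm ℝ X} (hq₁ : q ≤ p₁)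
    (hq₂ : q ≤ p₂) {f s₁ s₂ : Ω → X} (h₁ : IsMeasSimple s₁) (h₂ : IsMeasSimple s₂)
    (hi₁ : Integrable (fun ω => p₁ (s₁ ω - f ω)) μ)
    (hi₂ : Integrable (fun ω => p₂ (s₂ ω - f ω)) μ) (hE : MeasurableSet E) :
    q (simpleIntegral μ s₁ E - simpleIntegral μ s₂ E)
      ≤ ∫ ω, p₁ (s₁ ω - f ω) ∂μ + ∫ ω, p₂ (s₂ ω - f ω) ∂μ := by
  have hi : Integrable (fun ω => q (s₁ ω - s₂ ω)) μ := h₁.integrable_seminorm_sub h₂ q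
  have htri : ∀ ω, q (s₁ ω - s₂ ω) ≤ p₁ (s₁ ω - f ω) + p₂ (s₂ ω - f ω) := fun ω =>
    calc q (s₁ ω - s₂ ω) = q ((s₁ ω - f ω) - (s₂ ω - f ω)) := by
          rw [sub_sub_sub_cancel_right]
      _ ≤ q (s₁ ω - f ω) + q (s₂ ω - f ω) := map_sub_le_add q _ _
      _ ≤ p₁ (s₁ ω - f ω) + p₂ (s₂ ω - f ω) := add_le_add (hq₁ _) (hq₂ _)
  calc q (simpleIntegral μ s₁ E - simpleIntegral μ s₂ E)
      ≤ ∫ ω in E, q (s₁ ω - s₂ ω) ∂μ := seminorm_simpleIntegral_sub_le q h₁ h₂ hE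
    _ ≤ ∫ ω, q (s₁ ω - s₂ ω) ∂μ :=
        setIntegral_le_integral hi (.of_forall fun ω => apply_nonneg q _)
    _ ≤ ∫ ω, (p₁ (s₁ ω - f ω) + p₂ (s₂ ω - f ω)) ∂μ := integral_mono hi (hi₁.add hi₂) htri
    _ = ∫ ω, p₁ (s₁ ω - f ω) ∂μ + ∫ ω, p₂ (s₂ ω - f ω) ∂μ := integral_add hi₁ hi₂

end SimpleIntegral

lemma IsPBochnerWitness.seminorm_sub_eq_zero {X : Type*} [AddCommGroup X] [Module ℝ X]
    {μ : Measure Ω} [IsFiniteMeasure μ] {f : Ω → X} {q p₁ p₂ : Seminorm ℝ X}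
    (hq₁ : q ≤ p₁) (hq₂ : q ≤ p₂) {fn₁ fn₂ : ℕ → Ω → X} {Z₁ Z₂ : Set Ω}
    (W₁ : IsPBochnerWitness μ p₁ f fn₁ Z₁) (W₂ : IsPBochnerWitness μ p₂ f fn₂ Z₂)
    {E : Set Ω} (hE : MeasurableSet E) {x₁ x₂ : X}
    (h₁ : Tendsto (fun n => p₁ (x₁ - simpleIntegral μ (fn₁ n) E)) atTop (𝓝 0))
    (h₂ : Tendsto (fun n => p₂ (x₂ - simpleIntegral μ (fn₂ n) E)) atTop (𝓝 0)) :
    q (x₁ - x₂) = 0 := by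
  obtain ⟨hs₁, -, -, -, hi₁, hl₁, -⟩ := W₁
  obtain ⟨hs₂, -, -, -, hi₂, hl₂, -⟩ := W₂
  have hbound : ∀ n, q (x₁ - x₂) ≤ p₁ (x₁ - simpleIntegral μ (fn₁ n) E)
      + (∫ ω, p₁ (fn₁ n ω - f ω) ∂μ + ∫ ω, p₂ (fn₂ n ω - f ω) ∂μ)
      + p₂ (x₂ - simpleIntegral μ (fn₂ n) E) := fun n => by
    set I₁ := simpleIntegral μ (fn₁ n) E
    set I₂ := simpleIntegral μ (fn₂ n) E
    calc q (x₁ - x₂) = q ((x₁ - I₁) + (I₁ - I₂) - (x₂ - I₂)) := by congr 1; abel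
      _ ≤ q (x₁ - I₁) + q (I₁ - I₂) + q (x₂ - I₂) :=
          (map_sub_le_add q _ _).trans (add_le_add_left (map_add_le_add q _ _) _)
      _ ≤ _ := add_le_add (add_le_add (hq₁ _)
          (seminorm_simpleIntegral_sub_le_integral hq₁ hq₂ (hs₁ n) (hs₂ n) (hi₁ n) (hi₂ n) hE))
          (hq₂ _)
  have hlim := (h₁.add (hl₁.add hl₂)).add h₂
  rw [add_zero, add_zero, add_zero] at hlim
  exact le_antisymm (ge_of_tendsto' hlim hbound) (apply_nonneg q _)

section LocallyConvex

variable {X : Type*} [AddCommGroup X] [Module ℝ X]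

lemma tendsto_nhds_of_forall_continuous_seminorm [TopologicalSpace X] [IsTopologicalAddGroup X]
    [ContinuousSMul ℝ X] [LocallyConvexSpace ℝ X] {ι : Type*} {l : Filter ι} {u : ι → X} {y : X}
    (h : ∀ p : Seminorm ℝ X, Continuous p → Tendsto (fun i => p (u i - y)) l (𝓝 0)) :
    Tendsto u l (𝓝 y) := by
  have hws := with_gaugeSeminormFamily (𝕜 := ℝ) (E := X)
  rw [hws.tendsto_nhds]
  exact fun i ε hε => (h _ (hws.continuous_seminorm i)).eventually (gt_mem_nhds hε)

lemma Seminorm.sub_le_sub_add_sub (p : Seminorm ℝ X) (a b c : X) :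
    p (a - c) ≤ p (a - b) + p (b - c) := by
  simpa only [sub_add_sub_cancel] using map_add_le_add p (a - b) (b - c)

lemma exists_forall_seminorm_sub_eq_zero [UniformSpace X] [IsUniformAddGroup X]
    [ContinuousSMul ℝ X] [LocallyConvexSpace ℝ X] [CompleteSpace X] (x : Seminorm ℝ X → X)
    (hx : ∀ p q : Seminorm ℝ X, Continuous p → Continuous q → p ≤ q → p (x p - x q) = 0) :
    ∃ y, ∀ p : Seminorm ℝ X, Continuous p → p (y - x p) = 0 := by
  let ι := {p : Seminorm ℝ X // Continuous p}
  let _ : SemilatticeSup ι := Subtype.semilatticeSup fun p q hp hq => by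
    rw [Seminorm.coe_sup]; exact hp.max hq
  have : Nonempty ι := ⟨⟨0, continuous_zero⟩⟩
  have hclose : ∀ σ τ ρ : ι, σ ≤ τ → σ ≤ ρ → σ.1 (x ρ.1 - x τ.1) = 0 := fun σ τ ρ hτ hρ =>
    le_antisymm ((σ.1.sub_le_sub_add_sub _ (x σ.1) _).trans_eq (by
      rw [map_sub_rev, hx _ _ σ.2 ρ.2 hρ, hx _ _ σ.2 τ.2 hτ, add_zero])) (apply_nonneg _ _)
  have hcauchy : Cauchy (map (fun σ : ι => x σ.1) atTop) := by
    rw [cauchy_map_iff, uniformity_eq_comap_nhds_zero X, tendsto_comap_iff]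
    refine ⟨atTop_neBot, tendsto_nhds_of_forall_continuous_seminorm fun p hp => ?_⟩
    refine tendsto_const_nhds.congr' ?_
    filter_upwards [prod_mem_prod (Ici_mem_atTop ⟨p, hp⟩) (Ici_mem_atTop ⟨p, hp⟩)]
      with ⟨τ, ρ⟩ ⟨hτ, hρ⟩
    simp only [Function.comp_apply, sub_zero]
    exact (hclose ⟨p, hp⟩ τ ρ hτ hρ).symm
  obtain ⟨y, hy⟩ := CompleteSpace.complete hcauchy
  refine ⟨y, fun p hp => ?_⟩
  have hlim : Tendsto (fun τ : ι => p (y - x τ.1)) atTop (𝓝 0) := by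
    have hsub : Tendsto (fun τ : ι => y - x τ.1) atTop (𝓝 0) := by
      simpa using (tendsto_const_nhds (x := y)).sub hy
    have := (hp.tendsto 0).comp hsub
    rw [map_zero] at this
    exact this
  refine le_antisymm (ge_of_tendsto hlim ?_) (apply_nonneg p _)
  filter_upwards [Ici_mem_atTop ⟨p, hp⟩] with τ hτ
  calc p (y - x p) ≤ p (y - x τ.1) + p (x τ.1 - x p) := p.sub_le_sub_add_sub _ _ _
    _ = p (y - x τ.1) := by rw [hclose ⟨p, hp⟩ ⟨p, hp⟩ τ le_rfl hτ, add_zero]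

end LocallyConvex

variable {X : Type*} [AddCommGroup X] [Module ℝ X] [UniformSpace X]
  [IsUniformAddGroup X] [ContinuousSMul ℝ X] [LocallyConvexSpace ℝ X] [T2Space X]
  [CompleteSpace X]
theorem stmt6_general (μ : Measure Ω) [IsFiniteMeasure μ]
    (f : Ω → X) (hf : ∀ p : Seminorm ℝ X, Continuous ⇑p → IsPBochner μ p f) :
    IntegrableBySeminorm μ f := by
  choose! F Z hW using hf
  have hlim : ∀ p : Seminorm ℝ X, Continuous p → ∀ E, MeasurableSet E → ∃ x : X,
      Tendsto (fun n => p (x - simpleIntegral μ (F p n) E)) atTop (𝓝 0) :=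
    fun p hp => by obtain ⟨-, -, -, -, -, -, hlim⟩ := hW p hp; exact hlim
  choose! x hx using hlim
  have hcommon : ∀ E, MeasurableSet E → ∃ y : X, ∀ p : Seminorm ℝ X, Continuous p →
      p (y - x p E) = 0 := fun E hE =>
    exists_forall_seminorm_sub_eq_zero (x · E) fun p q hp hq hpq =>
      (hW p hp).seminorm_sub_eq_zero le_rfl hpq (hW q hq) hE (hx p hp E hE) (hx q hq E hE)
  choose! I hI using hcommon
  refine ⟨I, F, fun p hp => ?_, fun E hE p hp => ?_⟩
  · obtain ⟨hs, hZ, hμZ, hconv, hint, hint_lim, -⟩ := hW p hp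
    exact ⟨Z p, hs, hZ, hμZ, hconv, hint, hint_lim⟩
  · refine squeeze_zero (fun n => apply_nonneg p _) (fun n => ?_) (hx p hp E hE)
    calc p (I E - simpleIntegral μ (F p n) E)
        ≤ p (I E - x p E) + p (x p E - simpleIntegral μ (F p n) E) := p.sub_le_sub_add_sub _ _ _
      _ = p (x p E - simpleIntegral μ (F p n) E) := by rw [hI E hE p hp, zero_add]

/-- in a complete Hausdorff locally convex space, a function which
is `p`-Bochner integrable for every continuous seminorm `p` is integrable by
seminorm. -/
theorem stmt6 (μ : Measure Ω) [IsFiniteMeasure μ] [μ.IsComplete]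
    (f : Ω → X) (hf : ∀ p : Seminorm ℝ X, Continuous ⇑p → IsPBochner μ p f) :
    IntegrableBySeminorm μ f :=
  stmt6_general μ f hf
end

section
/- Let p be a continuous seminorm on X and let f, g : Ω → X both be p-Bochner integrable. Suppose that for every E ∈ Σ there exist a p-integral x_E of f over E and a p-integral y_E of g over E with p(x_E − y_E) = 0. Then p(f(t) − g(t)) = 0 for μ-almost every t ∈ Ω. -/
open MeasureTheory Filter Topology

variable {Ω : Type*} [MeasurableSpace Ω]

/-!
Let `fₙ`, `gₙ` be approximating simple sequences of `f` and `g`, `hₙ = fₙ - gₙ` and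
`ρₙ = p (fₙ - f) + p (gₙ - g)`. Comparing with the sequence that defines it, any `p`-integral
of `f` over `E` lies within `∫_E p (fₙ - f)` of `∫_E fₙ`; so the hypothesis gives
`p (∫_E hₙ) ≤ ∫_E ρₙ` for every measurable `E`. Applied to the fibres of the simple function `hₙ`
this yields `∫ p ∘ hₙ ≤ ∫ ρₙ → 0`, and since `p ∘ hₙ → p (f - g)` almost everywhere, Fatou's
lemma gives `p (f - g) = 0` almost everywhere.
-/

namespace IsMeasSimple

variable {X : Type*} {s : Ω → X}

def toSimpleFunc_s14 (hs : IsMeasSimple s) : SimpleFunc Ω X := ⟨s, hs.2, hs.1⟩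

@[simp]
theorem coe_toSimpleFunc (hs : IsMeasSimple s) : ⇑hs.toSimpleFunc_s14 = s := rfl

end IsMeasSimple

section SimpleIntegral

variable {X Y : Type*} [AddCommGroup X] [Module ℝ X] (μ : Measure Ω)

theorem simpleIntegral_eq_sum_range (s : SimpleFunc Ω X) (E : Set Ω) :
    simpleIntegral μ s E = ∑ x ∈ s.range, (μ.restrict E).real (s ⁻¹' {x}) • x := by
  rw [simpleIntegral, finsum_eq_sum_of_support_subset]
  · refine Finset.sum_congr rfl fun x _ => ?_
    rw [measureReal_restrict_apply (s.measurableSet_fiber x), Set.inter_comm, measureReal_def]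
  · intro x hx
    by_contra hxs
    refine hx ?_
    simp [(s.preimage_eq_empty_iff x).2 hxs]

theorem simpleIntegral_map [IsFiniteMeasure μ] (r : SimpleFunc Ω Y) (φ : Y → X) (E : Set Ω) :
    simpleIntegral μ (r.map φ) E = ∑ y ∈ r.range, (μ.restrict E).real (r ⁻¹' {y}) • φ y := by
  classical
  rw [simpleIntegral_eq_sum_range, SimpleFunc.range_map]
  refine Finset.sum_image' _ fun y hy => ?_
  rw [SimpleFunc.map_preimage_singleton, ← sum_measureReal_preimage_singleton _
    fun z _ => r.measurableSet_fiber z, Finset.sum_smul]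
  refine Finset.sum_congr rfl fun z hz => ?_
  rw [(Finset.mem_filter.1 hz).2]

theorem simpleIntegral_sub [IsFiniteMeasure μ] (s s' : SimpleFunc Ω X) (E : Set Ω) :
    simpleIntegral μ ⇑(s - s') E = simpleIntegral μ s E - simpleIntegral μ s' E := by
  have hsub : s - s' = (s.pair s').map fun z => z.1 - z.2 := by ext; simp
  rw [hsub, simpleIntegral_map]
  simp_rw [smul_sub, Finset.sum_sub_distrib]
  exact congrArg₂ (· - ·) (simpleIntegral_map μ _ Prod.fst E).symm
    (simpleIntegral_map μ _ Prod.snd E).symm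

theorem simpleIntegral_eq_setIntegral [IsFiniteMeasure μ] (s : SimpleFunc Ω ℝ) (E : Set Ω) :
    simpleIntegral μ s E = ∫ t in E, s t ∂μ := by
  rw [simpleIntegral_eq_sum_range, ← SimpleFunc.integral_eq,
    SimpleFunc.integral_eq_integral _ (SimpleFunc.integrable_of_isFiniteMeasure s)]

theorem simpleIntegral_preimage_singleton (s : SimpleFunc Ω X) (x : X) :
    simpleIntegral μ s (s ⁻¹' {x}) = μ.real (s ⁻¹' {x}) • x := by
  classical
  rw [simpleIntegral, finsum_eq_single _ x]
  · rw [Set.inter_self, measureReal_def]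
  · intro y hyx
    rw [← Set.preimage_inter, (Set.disjoint_singleton.2 hyx.symm).inter_eq]
    simp

variable (p : Seminorm ℝ X)

theorem seminorm_simpleIntegral_le [IsFiniteMeasure μ] (s : SimpleFunc Ω X) (E : Set Ω) :
    p (simpleIntegral μ s E) ≤ ∫ t in E, p (s t) ∂μ := by
  have hcomp := simpleIntegral_eq_setIntegral μ (s.map p) E
  simp only [SimpleFunc.map_apply] at hcomp
  rw [← hcomp, simpleIntegral_map, simpleIntegral_eq_sum_range]
  refine (Finset.le_sum_of_subadditive p (map_zero p).le (map_add_le_add p) _ _).trans_eq ?_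
  refine Finset.sum_congr rfl fun x _ => ?_
  rw [map_smul_eq_mul, Real.norm_of_nonneg measureReal_nonneg, smul_eq_mul]

theorem integral_seminorm_le_of_seminorm_simpleIntegral_le [IsFiniteMeasure μ] (s : SimpleFunc Ω X)
    {ρ : Ω → ℝ} (hρ : Integrable ρ μ)
    (h : ∀ x, p (simpleIntegral μ s (s ⁻¹' {x})) ≤ ∫ t in s ⁻¹' {x}, ρ t ∂μ) :
    ∫ t, p (s t) ∂μ ≤ ∫ t, ρ t ∂μ := by
  calc ∫ t, p (s t) ∂μ = ∑ x ∈ s.range, p (simpleIntegral μ s (s ⁻¹' {x})) := by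
        have hcomp := simpleIntegral_eq_setIntegral μ (s.map p) Set.univ
        simp only [SimpleFunc.map_apply, setIntegral_univ] at hcomp
        rw [← hcomp, simpleIntegral_map]
        refine Finset.sum_congr rfl fun x _ => ?_
        rw [simpleIntegral_preimage_singleton, map_smul_eq_mul,
          Real.norm_of_nonneg measureReal_nonneg, Measure.restrict_univ, smul_eq_mul]
    _ ≤ ∑ x ∈ s.range, ∫ t in s ⁻¹' {x}, ρ t ∂μ := Finset.sum_le_sum fun x _ => h x
    _ = ∫ t, ρ t ∂μ := by
        have hcover : ⋃ x ∈ s.range, ⇑s ⁻¹' {x} = Set.univ := by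
          simp [← Set.preimage_iUnion]
        rw [← integral_biUnion_finset _ (fun x _ => s.measurableSet_fiber x)
          (fun x _ y _ hxy => (Set.disjoint_singleton.2 hxy).preimage s)
          fun x _ => hρ.integrableOn, hcover, setIntegral_univ]

end SimpleIntegral

theorem ae_eq_zero_of_tendsto_ae_of_tendsto_integral {μ : Measure Ω} {v : ℕ → Ω → ℝ}
    {u : Ω → ℝ} (hv : ∀ n t, 0 ≤ v n t) (hv_int : ∀ n, Integrable (v n) μ)
    (hv_lim : Tendsto (fun n => ∫ t, v n t ∂μ) atTop (𝓝 0))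
    (hvu : ∀ᵐ t ∂μ, Tendsto (fun n => v n t) atTop (𝓝 (u t))) :
    ∀ᵐ t ∂μ, u t = 0 := by
  have hu_nonneg : ∀ᵐ t ∂μ, 0 ≤ u t := hvu.mono fun t ht => ge_of_tendsto' ht fun n => hv n t
  have hu_meas : AEMeasurable u μ :=
    aemeasurable_of_tendsto_metrizable_ae' (fun n => (hv_int n).aemeasurable) hvu
  have hzero : ∫⁻ t, ENNReal.ofReal (u t) ∂μ = 0 := by
    refine nonpos_iff_eq_zero.1 ?_
    calc ∫⁻ t, ENNReal.ofReal (u t) ∂μ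
        = ∫⁻ t, liminf (fun n => ENNReal.ofReal (v n t)) atTop ∂μ :=
          lintegral_congr_ae <| hvu.mono fun t ht =>
            (ENNReal.tendsto_ofReal ht).liminf_eq.symm
      _ ≤ liminf (fun n => ∫⁻ t, ENNReal.ofReal (v n t) ∂μ) atTop :=
          lintegral_liminf_le' fun n => (hv_int n).aemeasurable.ennreal_ofReal
      _ = 0 := by
          simp_rw [← ofReal_integral_eq_lintegral_ofReal (hv_int _)
            (Eventually.of_forall (hv _))]
          rw [(ENNReal.tendsto_ofReal hv_lim).liminf_eq, ENNReal.ofReal_zero]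
  filter_upwards [(lintegral_eq_zero_iff' hu_meas.ennreal_ofReal).1 hzero, hu_nonneg]
    with t ht hut
  exact le_antisymm (ENNReal.ofReal_eq_zero.1 ht) hut

section PBochner

variable {X : Type*} [AddCommGroup X] [Module ℝ X] {p : Seminorm ℝ X}

theorem Seminorm.tendsto_sub_of_tendsto {a b : ℕ → X} {a₀ b₀ : X}
    (ha : Tendsto (fun n => p (a n - a₀)) atTop (𝓝 0))
    (hb : Tendsto (fun n => p (b n - b₀)) atTop (𝓝 0)) :
    Tendsto (fun n => p (a n - b n)) atTop (𝓝 (p (a₀ - b₀))) := by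
  rw [tendsto_iff_norm_sub_tendsto_zero]
  refine squeeze_zero (fun n => norm_nonneg _) (fun n => ?_) (by simpa using ha.add hb)
  calc ‖p (a n - b n) - p (a₀ - b₀)‖ ≤ p ((a n - b n) - (a₀ - b₀)) := p.norm_sub_map_le_sub _ _
    _ ≤ p (a n - a₀) + p (b n - b₀) := by rw [sub_sub_sub_comm]; exact map_sub_le_add p _ _

variable {μ : Measure Ω} [IsFiniteMeasure μ]

theorem seminorm_simpleIntegral_sub_le_add (s s' : SimpleFunc Ω X) {f : Ω → X}
    (hs : Integrable (fun t => p (s t - f t)) μ) (hs' : Integrable (fun t => p (s' t - f t)) μ)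
    (E : Set Ω) :
    p (simpleIntegral μ s E - simpleIntegral μ s' E)
      ≤ ∫ t in E, p (s t - f t) ∂μ + ∫ t in E, p (s' t - f t) ∂μ := by
  rw [← simpleIntegral_sub, ← integral_add hs.integrableOn hs'.integrableOn]
  refine (seminorm_simpleIntegral_le μ p _ E).trans (integral_mono_of_nonneg
    (Eventually.of_forall fun t => apply_nonneg p _) (hs.add hs').integrableOn
    (Eventually.of_forall fun t => ?_))
  simpa [map_sub_rev p (f t)] using le_map_sub_add_map_sub p (s t) (f t) (s' t)

theorem IsPIntegral.seminorm_sub_simpleIntegral_le {f : Ω → X} {E : Set Ω} {x : X}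
    (hx : IsPIntegral μ p f E x) {fn : ℕ → Ω → X} {Z : Set Ω}
    (hfn : IsPBochnerWitness μ p f fn Z) (n : ℕ) :
    p (x - simpleIntegral μ (fn n) E) ≤ ∫ t in E, p (fn n t - f t) ∂μ := by
  obtain ⟨fm, Z', ⟨hfm_simple, -, -, -, hfm_int, hfm_lim, -⟩, hx_lim⟩ := hx
  obtain ⟨hfn_simple, -, -, -, hfn_int, -, -⟩ := hfn
  have hbound : ∀ m, p (x - simpleIntegral μ (fn n) E)
      ≤ p (x - simpleIntegral μ (fm m) E) + ∫ t, p (fm m t - f t) ∂μ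
        + ∫ t in E, p (fn n t - f t) ∂μ := by
    intro m
    have htri := le_map_sub_add_map_sub p x (simpleIntegral μ (fm m) E)
      (simpleIntegral μ (fn n) E)
    have hsub := seminorm_simpleIntegral_sub_le_add (hfm_simple m).toSimpleFunc_s14
      (hfn_simple n).toSimpleFunc_s14 (hfm_int m) (hfn_int n) E
    have hset := setIntegral_le_integral (s := E) (hfm_int m)
      (Eventually.of_forall fun t => apply_nonneg p _)
    simp only [IsMeasSimple.coe_toSimpleFunc] at hsub
    linarith
  have hlim := (hx_lim.add hfm_lim).add (tendsto_const_nhds (x := ∫ t in E, p (fn n t - f t) ∂μ))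
  simpa using ge_of_tendsto' hlim hbound

theorem IsPIntegral.seminorm_simpleIntegral_sub_le {f g : Ω → X} {E : Set Ω} {x y : X}
    (hx : IsPIntegral μ p f E x) (hy : IsPIntegral μ p g E y) {fn gn : ℕ → Ω → X}
    {Zf Zg : Set Ω} (hfn : IsPBochnerWitness μ p f fn Zf) (hgn : IsPBochnerWitness μ p g gn Zg)
    (n : ℕ) :
    p (simpleIntegral μ (fn n) E - simpleIntegral μ (gn n) E)
      ≤ ∫ t in E, p (fn n t - f t) ∂μ + p (x - y) + ∫ t in E, p (gn n t - g t) ∂μ := by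
  have h₁ := le_map_sub_add_map_sub p (simpleIntegral μ (fn n) E) x (simpleIntegral μ (gn n) E)
  have h₂ := le_map_sub_add_map_sub p x y (simpleIntegral μ (gn n) E)
  rw [map_sub_rev p _ x] at h₁
  linarith [hx.seminorm_sub_simpleIntegral_le hfn n, hy.seminorm_sub_simpleIntegral_le hgn n]

end PBochner

variable {X : Type*} [AddCommGroup X] [Module ℝ X] [TopologicalSpace X]
  [IsTopologicalAddGroup X] [ContinuousSMul ℝ X] [LocallyConvexSpace ℝ X] [T2Space X]
theorem stmt14_general (μ : Measure Ω) [IsFiniteMeasure μ]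
    (p : Seminorm ℝ X) (f g : Ω → X)
    (hf : IsPBochner μ p f) (hg : IsPBochner μ p g)
    (h : ∀ E : Set Ω, MeasurableSet E → ∃ x y : X,
      IsPIntegral μ p f E x ∧ IsPIntegral μ p g E y ∧ p (x - y) = 0) :
    ∀ᵐ t ∂μ, p (f t - g t) = 0 := by
  obtain ⟨fn, Zf, hfn⟩ := hf
  obtain ⟨gn, Zg, hgn⟩ := hg
  obtain ⟨hf_simple, -, hZf, hf_lim, hf_int, hf_int_lim, -⟩ := id hfn
  obtain ⟨hg_simple, -, hZg, hg_lim, hg_int, hg_int_lim, -⟩ := id hgn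
  let F n := (hf_simple n).toSimpleFunc_s14 - (hg_simple n).toSimpleFunc_s14
  let ρ n t := p (fn n t - f t) + p (gn n t - g t)
  have hρ_int : ∀ n, Integrable (ρ n) μ := fun n => (hf_int n).add (hg_int n)
  have hF_le : ∀ n E, MeasurableSet E → p (simpleIntegral μ (F n) E) ≤ ∫ t in E, ρ n t ∂μ := by
    intro n E hE
    obtain ⟨x, y, hx, hy, hxy⟩ := h E hE
    rw [simpleIntegral_sub, integral_add (hf_int n).integrableOn (hg_int n).integrableOn]
    simpa [hxy] using hx.seminorm_simpleIntegral_sub_le hy hfn hgn n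
  have hF_int : ∀ n, ∫ t, p (F n t) ∂μ ≤ ∫ t, ρ n t ∂μ := fun n =>
    integral_seminorm_le_of_seminorm_simpleIntegral_le μ p (F n) (hρ_int n)
      fun x => hF_le n _ ((F n).measurableSet_fiber x)
  have hρ_lim : Tendsto (fun n => ∫ t, ρ n t ∂μ) atTop (𝓝 0) := by
    simpa only [ρ, integral_add (hf_int _) (hg_int _), add_zero] using hf_int_lim.add hg_int_lim
  refine ae_eq_zero_of_tendsto_ae_of_tendsto_integral (v := fun n t => p (F n t))
    (fun n t => apply_nonneg p _)
    (fun n => SimpleFunc.integrable_of_isFiniteMeasure ((F n).map p))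
    (squeeze_zero (fun n => integral_nonneg fun t => apply_nonneg p _) hF_int hρ_lim) ?_
  filter_upwards [measure_eq_zero_iff_ae_notMem.1 (measure_union_null hZf hZg)] with t ht
  simpa [F] using Seminorm.tendsto_sub_of_tendsto (hf_lim t fun hz => ht (Or.inl hz))
    (hg_lim t fun hz => ht (Or.inr hz))

/-- if `p` is a continuous seminorm, `f` and `g` are `p`-Bochner
integrable and for every measurable set `E` there exist a `p`-integral `x_E` of
`f` over `E` and a `p`-integral `y_E` of `g` over `E` with `p (x_E - y_E) = 0`,
then `p (f t - g t) = 0` for `μ`-a.e. `t`. -/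
theorem stmt14 (μ : Measure Ω) [IsFiniteMeasure μ] [μ.IsComplete]
    (p : Seminorm ℝ X) (hp : Continuous ⇑p) (f g : Ω → X)
    (hf : IsPBochner μ p f) (hg : IsPBochner μ p g)
    (h : ∀ E : Set Ω, MeasurableSet E → ∃ x y : X,
      IsPIntegral μ p f E x ∧ IsPIntegral μ p g E y ∧ p (x - y) = 0) :
    ∀ᵐ t ∂μ, p (f t - g t) = 0 :=
  stmt14_general μ p f g hf hg h
end
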